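/- arXiv:1410.4491 — 4 statements merged into one kernel-verified Lean document; each statement's English description precedes it below -/
import Mathlib

section
/- Let A be a unital C*-algebra, B a C*-algebra, τ : A → B completely positive, and let (π₀, V, F₀) be the GNS–Stinespring construction: F₀ is the Hilbert B-module completion of (A ⊗_alg B)/K, π₀(a')(a⊗b + K) = a'a⊗b + K, and V(b) = 1⊗b + K. Then V is adjointable and τ(a)b = V* π₀(a) V b for all a ∈ A, b ∈ B. -/
open scoped TensorProduct

/-- A (pre-)inner-product module over a C*-algebra `A`. -/
structure PreHilbertMod (A : Type*) (E : Type*)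
    [NormedRing A] [StarRing A] [PartialOrder A]
    [NormedAlgebra ℂ A] [AddCommGroup E] [Module ℂ E] where
  smul : E → A → E
  inner : E → E → A
  smul_smul : ∀ (x : E) (a b : A), smul (smul x a) b = smul x (a * b)
  smul_add_right : ∀ (x : E) (a b : A), smul x (a + b) = smul x a + smul x b
  add_smul_left : ∀ (x y : E) (a : A), smul (x + y) a = smul x a + smul y a
  smulC_left : ∀ (α : ℂ) (x : E) (a : A), smul (α • x) a = α • smul x a
  smulC_right : ∀ (α : ℂ) (x : E) (a : A), smul x (α • a) = α • smul x a
  inner_nonneg : ∀ x : E, 0 ≤ inner x x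
  inner_definite : ∀ x : E, inner x x = 0 → x = 0
  inner_smul_right : ∀ (x y : E) (a : A), inner x (smul y a) = inner x y * a
  inner_conj : ∀ x y : E, inner x y = star (inner y x)
  inner_add_right : ∀ x y z : E, inner x (y + z) = inner x y + inner x z
  inner_smulC_right : ∀ (x y : E) (μ : ℂ), inner x (μ • y) = μ • inner x y

/-- in the GNS–Stinespring construction `(π₀, V, F₀)` for a
completely positive map `τ : A → B` with `A` unital (the completion `F₀` of
`(A ⊗ B)/K` presented by a form-preserving dense-range map `q`, with
`π₀(a')(a⊗b+K) = a'a⊗b+K` and `V b = 1⊗b+K`), the map `V` is adjointable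
(`B` viewed as a Hilbert `B`-module over itself, `⟨b,c⟩ = b* c`) and
`τ(a) b = V* π₀(a) V b` for all `a ∈ A`, `b ∈ B`. -/
theorem gns_stinespring_factorization {A B F₀ : Type*}
    [NormedRing A] [StarRing A] [CStarRing A] [PartialOrder A] [StarOrderedRing A]
    [NormedAlgebra ℂ A] [StarModule ℂ A] [CompleteSpace A]
    [NormedRing B] [StarRing B] [CStarRing B] [PartialOrder B] [StarOrderedRing B]
    [NormedAlgebra ℂ B] [StarModule ℂ B] [CompleteSpace B]
    [NormedAddCommGroup F₀] [NormedSpace ℂ F₀] [CompleteSpace F₀]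
    (τ : A →ₗ[ℂ] B)
    (hcp : ∀ (n : ℕ) (a : Fin n → A) (b : Fin n → B),
      0 ≤ ∑ j, ∑ i, star (b j) * τ (star (a j) * a i) * b i)
    (φ : A ⊗[ℂ] B → A ⊗[ℂ] B → B)
    (hφ_tmul : ∀ (a c : A) (b d : B),
      φ (a ⊗ₜ[ℂ] b) (c ⊗ₜ[ℂ] d) = star b * τ (star a * c) * d)
    (hφ_add_left : ∀ x y z, φ (x + y) z = φ x z + φ y z)
    (hφ_add_right : ∀ x y z, φ x (y + z) = φ x y + φ x z)
    (hφ_smul_left : ∀ (μ : ℂ) x y, φ (μ • x) y = star μ • φ x y)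
    (hφ_smul_right : ∀ (μ : ℂ) x y, φ x (μ • y) = μ • φ x y)
    (hF : PreHilbertMod B F₀)
    (hnorm : ∀ f : F₀, ‖f‖ ^ 2 = ‖hF.inner f f‖)
    (q : A ⊗[ℂ] B →ₗ[ℂ] F₀)
    (hq_inner : ∀ x y : A ⊗[ℂ] B, hF.inner (q x) (q y) = φ x y)
    (hq_dense : DenseRange q)
    -- the GNS representation `π₀` and the map `V b = 1 ⊗ b + K`
    (π₀ : A → F₀ → F₀)
    (hπ₀ : ∀ (a' a : A) (b : B), π₀ a' (q (a ⊗ₜ[ℂ] b)) = q ((a' * a) ⊗ₜ[ℂ] b))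
    (V : B → F₀)
    (hV : ∀ b : B, V b = q ((1 : A) ⊗ₜ[ℂ] b)) :
    ∃ Vadj : F₀ → B,
      -- `Vadj` is an adjoint of `V`
      (∀ (b : B) (f : F₀), hF.inner (V b) f = star b * Vadj f) ∧
      -- the Stinespring factorization `τ(a) b = V* π₀(a) V b`
      (∀ (a : A) (b : B), τ a * b = Vadj (π₀ a (V b))) := by

  classical
  set u : F₀ := q ((1 : A) ⊗ₜ[ℂ] (1 : B)) with hu
  have hself : hF.inner u u = τ 1 := by
    rw [hu, hq_inner, hφ_tmul]; simp
  have hτ1 : star (τ 1) = τ 1 := by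
    conv_lhs => rw [← hself]
    rw [← hF.inner_conj, hself]
  -- right subtraction
  have inner_sub_right : ∀ x y z : F₀,
      hF.inner x (y - z) = hF.inner x y - hF.inner x z := by
    intro x y z
    have : y - z = y + (-1 : ℂ) • z := by simp [sub_eq_add_neg]
    rw [this, hF.inner_add_right, hF.inner_smulC_right, neg_one_smul, ← sub_eq_add_neg]
  have inner_sub_left : ∀ x y z : F₀,
      hF.inner (x - y) z = hF.inner x z - hF.inner y z := by
    intro x y z
    rw [hF.inner_conj, inner_sub_right, star_sub, ← hF.inner_conj, ← hF.inner_conj]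
  have key : ∀ b : B, q ((1 : A) ⊗ₜ[ℂ] b) = hF.smul u b := by
    intro b
    set x : F₀ := q ((1 : A) ⊗ₜ[ℂ] b) with hx
    set y : F₀ := hF.smul u b with hy
    have h1 : hF.inner x x = star b * τ 1 * b := by
      rw [hx, hq_inner, hφ_tmul]; simp
    have h2 : hF.inner x y = star b * τ 1 * b := by
      rw [hy, hF.inner_smul_right, hx, hu, hq_inner, hφ_tmul]; simp
    have h3 : hF.inner y x = star b * τ 1 * b := by
      rw [hF.inner_conj, h2, star_mul, star_mul, star_star, hτ1, mul_assoc]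
    have h4 : hF.inner y y = star b * τ 1 * b := by
      conv_lhs => rw [hy, hF.inner_smul_right]
      have : hF.inner y u = star b * τ 1 := by
        rw [hF.inner_conj, hy, hF.inner_smul_right, star_mul, hself, hτ1]
      rw [this]
    have hzero : hF.inner (x - y) (x - y) = 0 := by
      rw [inner_sub_left, inner_sub_right, inner_sub_right, h1, h2, h3, h4]
      abel
    have := hF.inner_definite _ hzero
    exact sub_eq_zero.mp this
  refine ⟨fun f => hF.inner u f, ?_, ?_⟩
  · intro b f
    rw [hV, key, hF.inner_conj, hF.inner_smul_right, star_mul, ← hF.inner_conj]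
  · intro a b
    rw [hV, hπ₀]
    show τ a * b = hF.inner u (q ((a * 1) ⊗ₜ[ℂ] b))
    rw [hu, hq_inner, hφ_tmul]
    simp
end

section
/- Let E be a Hilbert A-module, E' a Hilbert B-module, τ : A → B completely positive with A unital, and T : E → E' a τ-map. Then T is linear, and with the Stinespring data (π₀, V, F₀) and quasi-representation Ψ₀ as constructed, T(x)b = Ψ₀(x)(π₀(1) V b) = Ψ₀(x) V b for all x ∈ E, b ∈ B. -/
open scoped TensorProduct

/-- a τ-map `T : E → E'` (τ completely positive, `A` unital) is
linear, and with the Stinespring data `(π₀, V, F₀)` and the quasi-representation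
`Ψ₀` one has `T(x) b = Ψ₀(x)(π₀(1) V b) = Ψ₀(x)(V b)` for all `x ∈ E`, `b ∈ B`. -/
theorem tau_map_linear_and_factors {A B E E' F₀ : Type*}
    [NormedRing A] [StarRing A] [CStarRing A] [PartialOrder A] [StarOrderedRing A]
    [NormedAlgebra ℂ A] [StarModule ℂ A] [CompleteSpace A]
    [NormedRing B] [StarRing B] [CStarRing B] [PartialOrder B] [StarOrderedRing B]
    [NormedAlgebra ℂ B] [StarModule ℂ B] [CompleteSpace B]
    [AddCommGroup E] [Module ℂ E]
    [NormedAddCommGroup E'] [NormedSpace ℂ E'] [CompleteSpace E']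
    [NormedAddCommGroup F₀] [NormedSpace ℂ F₀] [CompleteSpace F₀]
    (hE : PreHilbertMod A E) (hE' : PreHilbertMod B E')
    (hE_one : ∀ x : E, hE.smul x 1 = x)
    (τ : A →ₗ[ℂ] B)
    (hcp : ∀ (n : ℕ) (a : Fin n → A) (b : Fin n → B),
      0 ≤ ∑ j, ∑ i, star (b j) * τ (star (a j) * a i) * b i)
    (T : E → E')
    (hT : ∀ x y : E, hE'.inner (T x) (T y) = τ (hE.inner x y))
    -- the GNS–Stinespring construction for `τ`
    (φ : A ⊗[ℂ] B → A ⊗[ℂ] B → B)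
    (hφ_tmul : ∀ (a c : A) (b d : B),
      φ (a ⊗ₜ[ℂ] b) (c ⊗ₜ[ℂ] d) = star b * τ (star a * c) * d)
    (hF : PreHilbertMod B F₀)
    (q : A ⊗[ℂ] B →ₗ[ℂ] F₀)
    (hq_inner : ∀ x y : A ⊗[ℂ] B, hF.inner (q x) (q y) = φ x y)
    (π₀ : A → F₀ → F₀)
    (hπ₀ : ∀ (a' a : A) (b : B), π₀ a' (q (a ⊗ₜ[ℂ] b)) = q ((a' * a) ⊗ₜ[ℂ] b))
    (V : B → F₀)
    (hV : ∀ b : B, V b = q ((1 : A) ⊗ₜ[ℂ] b))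
    -- the quasi-representation `Ψ₀`
    (Ψ₀ : E → F₀ → E')
    (hΨ₀ : ∀ (x : E) (a : A) (b : B),
      Ψ₀ x (π₀ a (V b)) = hE'.smul (T (hE.smul x a)) b) :
    -- `T` is linear
    (∀ x y : E, T (x + y) = T x + T y) ∧
    (∀ (μ : ℂ) (x : E), T (μ • x) = μ • T x) ∧
    -- `T(x) b = Ψ₀(x)(π₀(1) V b) = Ψ₀(x)(V b)`
    (∀ (x : E) (b : B), hE'.smul (T x) b = Ψ₀ x (π₀ 1 (V b))) ∧
    (∀ (x : E) (b : B), hE'.smul (T x) b = Ψ₀ x (V b)) := by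
  -- helper lemmas on the `E'` inner product
  have negr : ∀ (u w : E'), hE'.inner u (-w) = - hE'.inner u w := by
    intro u w
    rw [← neg_one_smul ℂ w, hE'.inner_smulC_right, neg_one_smul]
  have addl : ∀ (u v w : E'), hE'.inner (u + v) w = hE'.inner u w + hE'.inner v w := by
    intro u v w
    rw [hE'.inner_conj, hE'.inner_add_right, star_add, ← hE'.inner_conj, ← hE'.inner_conj]
  have negl : ∀ (u w : E'), hE'.inner (-u) w = - hE'.inner u w := by
    intro u w
    rw [hE'.inner_conj, negr, star_neg, ← hE'.inner_conj]
  have smull : ∀ (μ : ℂ) (u w : E'),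
      hE'.inner (μ • u) w = (starRingEnd ℂ μ) • hE'.inner u w := by
    intro μ u w
    rw [hE'.inner_conj, hE'.inner_smulC_right, star_smul, ← hE'.inner_conj,
      starRingEnd_apply]
  -- helper lemmas on the `E` inner product
  have eaddl : ∀ (u v w : E), hE.inner (u + v) w = hE.inner u w + hE.inner v w := by
    intro u v w
    rw [hE.inner_conj, hE.inner_add_right, star_add, ← hE.inner_conj, ← hE.inner_conj]
  have esmull : ∀ (μ : ℂ) (u w : E),
      hE.inner (μ • u) w = (starRingEnd ℂ μ) • hE.inner u w := by
    intro μ u w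
    rw [hE.inner_conj, hE.inner_smulC_right, star_smul, ← hE.inner_conj,
      starRingEnd_apply]
  have hπV : ∀ b : B, π₀ 1 (V b) = V b := by
    intro b
    rw [hV, hπ₀, one_mul]
  refine ⟨?_, ?_, ?_, ?_⟩
  · intro x y
    have h0 : hE'.inner (T (x + y) - (T x + T y)) (T (x + y) - (T x + T y)) = 0 := by
      simp only [sub_eq_add_neg, neg_add_rev, addl, negl, hE'.inner_add_right, negr,
        hT, eaddl, hE.inner_add_right, map_add]
      abel
    have := hE'.inner_definite _ h0
    rw [sub_eq_zero] at this
    exact this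
  · intro μ x
    have h0 : hE'.inner (T (μ • x) - μ • T x) (T (μ • x) - μ • T x) = 0 := by
      simp only [sub_eq_add_neg, addl, negl, hE'.inner_add_right, negr, smull,
        hE'.inner_smulC_right, hT, esmull, hE.inner_smulC_right, map_smul, smul_smul]
      module
    have := hE'.inner_definite _ h0
    rw [sub_eq_zero] at this
    exact this
  · intro x b
    rw [hΨ₀ x 1 b, hE_one]
  · intro x b
    rw [← hπV, hΨ₀ x 1 b, hE_one]
end

section
/- Let (G, η, E) be a dynamical system on a full Hilbert A-module E and let (Ψ, v, w, F, F') be a (w,v)-covariant quasi-representation: Ψ(η_t(x)) = w_t Ψ(x) v_t* for all x ∈ E, t ∈ G, where v, w are unitary representations of G on Hilbert B-modules F, F'. If π : A → B^a(F) is the *-homomorphism associated to Ψ, then π is v-covariant with respect to the induced C*-dynamical system (G, α^η, A): π(α^η_t(a)) = v_t π(a) v_t* for all a ∈ A, t ∈ G. -/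
namespace PreHilbertMod

variable {A E : Type*} [NormedRing A] [StarRing A] [PartialOrder A] [NormedAlgebra ℂ A]
  [AddCommGroup E] [Module ℂ E] (M : PreHilbertMod A E)

@[simps!]
def innerRight (x : E) : E →+ A :=
  AddMonoidHom.mk' (M.inner x) (M.inner_add_right x)

theorem inner_add_left (x y z : E) : M.inner (x + y) z = M.inner x z + M.inner y z := by
  rw [M.inner_conj, M.inner_add_right, star_add, ← M.inner_conj, ← M.inner_conj]

theorem inner_smulC_left [StarModule ℂ A] (μ : ℂ) (x y : E) :
    M.inner (μ • x) y = star μ • M.inner x y := by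
  rw [M.inner_conj, M.inner_smulC_right, star_smul, ← M.inner_conj]

theorem ext_inner_left {x y : E} (h : ∀ z, M.inner z x = M.inner z y) : x = y := by
  have hself : M.inner (x - y) (x - y) = 0 := by
    rw [← M.innerRight_apply, map_sub, sub_eq_zero]
    exact h (x - y)
  exact sub_eq_zero.mp (M.inner_definite _ hself)

theorem ext_inner_right {x y : E} (h : ∀ z, M.inner x z = M.inner y z) : x = y :=
  M.ext_inner_left fun z => by rw [M.inner_conj, h, ← M.inner_conj]

end PreHilbertMod

section DenseSpan

variable {R M N : Type*} [Semiring R] [AddCommMonoid M] [Module R M] [TopologicalSpace M]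
  [AddCommGroup N] [SMul R N] [TopologicalSpace N] [T2Space N]

theorem eq_of_eqOn_of_dense_span {s : Set M} (hs : Dense (Submodule.span R s : Set M))
    (σ : R → R) {f g : M → N} (hf : Continuous f) (hg : Continuous g)
    (hf_add : ∀ a b, f (a + b) = f a + f b) (hg_add : ∀ a b, g (a + b) = g a + g b)
    (hf_smul : ∀ (μ : R) a, f (μ • a) = σ μ • f a) (hg_smul : ∀ (μ : R) a, g (μ • a) = σ μ • g a)
    (hfg : Set.EqOn f g s) : f = g := by
  refine Continuous.ext_on hs hf hg fun a ha => ?_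
  induction ha using Submodule.span_induction with
  | mem a ha => exact hfg ha
  | zero => rw [← AddMonoidHom.mk'_apply f hf_add, ← AddMonoidHom.mk'_apply g hg_add, map_zero,
      map_zero]
  | add a b _ _ ha hb => rw [hf_add, hg_add, ha, hb]
  | smul μ a _ ha => rw [hf_smul, hg_smul, ha]

end DenseSpan

theorem inner_quasiRep_covariant {A B E F F' G : Type*}
    [NormedRing A] [StarRing A] [PartialOrder A] [NormedAlgebra ℂ A]
    [NormedRing B] [StarRing B] [PartialOrder B] [NormedAlgebra ℂ B]
    [AddCommGroup E] [Module ℂ E] [AddCommGroup F] [Module ℂ F] [AddCommGroup F'] [Module ℂ F']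
    {hE : PreHilbertMod A E} {hF : PreHilbertMod B F} {hF' : PreHilbertMod B F'}
    {η : G → E → E} {vadj : G → F → F} {w wadj : G → F' → F'}
    (hw_adj : ∀ (t : G) (f g : F'), hF'.inner (w t f) g = hF'.inner f (wadj t g))
    (hw_right : ∀ (t : G) (f : F'), wadj t (w t f) = f)
    {Ψ : E → F → F'} {π : A → F → F}
    (hquasi : ∀ (x y : E) (f₁ f₂ : F),
      hF'.inner (Ψ y f₁) (Ψ x f₂) = hF.inner (π (hE.inner x y) f₁) f₂)
    (hΨcov : ∀ (t : G) (x : E) (f : F), Ψ (η t x) f = w t (Ψ x (vadj t f)))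
    (t : G) (x y : E) (f g : F) :
    hF.inner (π (hE.inner (η t x) (η t y)) f) g =
      hF.inner (π (hE.inner x y) (vadj t f)) (vadj t g) := by
  rw [← hquasi, ← hquasi, hΨcov, hΨcov, hw_adj, hw_right]

theorem covariant_quasi_rep_gives_covariant_rep_general {A B E F F' G : Type*}
    [NormedRing A] [StarRing A] [PartialOrder A] [NormedAlgebra ℂ A]
    [NormedRing B] [StarRing B] [PartialOrder B] [NormedAlgebra ℂ B]
    [StarModule ℂ B]
    [NormedAddCommGroup E] [NormedSpace ℂ E]
    [AddCommGroup F] [Module ℂ F] [AddCommGroup F'] [Module ℂ F']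
    (hE : PreHilbertMod A E)
    (hfull : Dense ((Submodule.span ℂ
      {a : A | ∃ x y : E, a = hE.inner x y} : Submodule ℂ A) : Set A))
    (hF : PreHilbertMod B F) (hF' : PreHilbertMod B F')
    -- the dynamical system `(G, η, E)` and its induced system `(G, α^η, A)`
    (η : G → E → E)
    (α : G → A → A)
    (hα_add : ∀ (t : G) (a b : A), α t (a + b) = α t a + α t b)
    (hα_smulC : ∀ (t : G) (μ : ℂ) (a : A), α t (μ • a) = μ • α t a)
    (hα_cont : ∀ t : G, Continuous (α t))
    (hα : ∀ (t : G) (x y : E), α t (hE.inner x y) = hE.inner (η t x) (η t y))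
    -- unitary representations `v` on `F` and `w` on `F'` (with adjoints)
    (v : G → F → F) (vadj : G → F → F)
    (hv_adj : ∀ (t : G) (f g : F), hF.inner (v t f) g = hF.inner f (vadj t g))
    (w : G → F' → F') (wadj : G → F' → F')
    (hw_adj : ∀ (t : G) (f g : F'), hF'.inner (w t f) g = hF'.inner f (wadj t g))
    (hw_right : ∀ (t : G) (f : F'), wadj t (w t f) = f)
    -- the quasi-representation `Ψ` with associated *-homomorphism `π`
    (Ψ : E → F → F') (π : A → F → F)
    (hπ_add : ∀ (a a' : A) (f : F), π (a + a') f = π a f + π a' f)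
    (hπ_smulC : ∀ (μ : ℂ) (a : A) (f : F), π (μ • a) f = μ • π a f)
    (hπ_cont : ∀ (f f' : F), Continuous fun a : A => hF.inner (π a f) f')
    (hquasi : ∀ (x y : E) (f₁ f₂ : F),
      hF'.inner (Ψ y f₁) (Ψ x f₂) = hF.inner (π (hE.inner x y) f₁) f₂)
    -- `(w,v)`-covariance of `Ψ`
    (hΨcov : ∀ (t : G) (x : E) (f : F), Ψ (η t x) f = w t (Ψ x (vadj t f))) :
    ∀ (t : G) (a : A) (f : F), π (α t a) f = v t (π a (vadj t f)) := by
  intro t a f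
  have hweak : ∀ g : F, (fun b => hF.inner (π (α t b) f) g) =
      fun b => hF.inner (π b (vadj t f)) (vadj t g) := fun g =>
    eq_of_eqOn_of_dense_span hfull star ((hπ_cont f g).comp (hα_cont t))
      (hπ_cont (vadj t f) (vadj t g))
      (fun b c => by rw [hα_add, hπ_add, hF.inner_add_left])
      (fun b c => by rw [hπ_add, hF.inner_add_left])
      (fun μ b => by rw [hα_smulC, hπ_smulC, hF.inner_smulC_left])
      (fun μ b => by rw [hπ_smulC, hF.inner_smulC_left])
      (by
        rintro _ ⟨x, y, rfl⟩
        simp only [hα]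
        exact inner_quasiRep_covariant hw_adj hw_right hquasi hΨcov t x y f g)
  refine hF.ext_inner_right fun g => ?_
  rw [hv_adj]
  exact congrFun (hweak g) a

/-- if `(Ψ, v, w, F, F')` is a `(w,v)`-covariant
quasi-representation of a dynamical system `(G, η, E)` on a full Hilbert
`A`-module `E`, then the associated *-homomorphism `π : A → B^a(F)` is
`v`-covariant with respect to the induced system `(G, α^η, A)`:
`π(α^η_t(a)) = v_t π(a) v_t*`. -/
theorem covariant_quasi_rep_gives_covariant_rep {A B E F F' G : Type*}
    [NormedRing A] [StarRing A] [CStarRing A] [PartialOrder A] [StarOrderedRing A]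
    [NormedAlgebra ℂ A] [StarModule ℂ A] [CompleteSpace A]
    [NormedRing B] [StarRing B] [CStarRing B] [PartialOrder B] [StarOrderedRing B]
    [NormedAlgebra ℂ B] [StarModule ℂ B] [CompleteSpace B]
    [NormedAddCommGroup E] [NormedSpace ℂ E]
    [AddCommGroup F] [Module ℂ F] [AddCommGroup F'] [Module ℂ F']
    [Group G] [TopologicalSpace G] [IsTopologicalGroup G] [LocallyCompactSpace G]
    (hE : PreHilbertMod A E)
    (hnormE : ∀ x : E, ‖x‖ ^ 2 = ‖hE.inner x x‖)
    (hfull : Dense ((Submodule.span ℂ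
      {a : A | ∃ x y : E, a = hE.inner x y} : Submodule ℂ A) : Set A))
    (hF : PreHilbertMod B F) (hF' : PreHilbertMod B F')
    -- the dynamical system `(G, η, E)` and its induced system `(G, α^η, A)`
    (η : G → E → E)
    (hη_one : ∀ x : E, η 1 x = x)
    (hη_mul : ∀ (s t : G) (x : E), η (s * t) x = η s (η t x))
    (hη_bij : ∀ t : G, Function.Bijective (η t))
    (hη_cont : ∀ x : E, Continuous fun t : G => η t x)
    (α : G → A → A)
    (hα_add : ∀ (t : G) (a b : A), α t (a + b) = α t a + α t b)
    (hα_smulC : ∀ (t : G) (μ : ℂ) (a : A), α t (μ • a) = μ • α t a)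
    (hα_cont : ∀ t : G, Continuous (α t))
    (hα : ∀ (t : G) (x y : E), α t (hE.inner x y) = hE.inner (η t x) (η t y))
    -- unitary representations `v` on `F` and `w` on `F'` (with adjoints)
    (v : G → F → F) (vadj : G → F → F)
    (hv_adj : ∀ (t : G) (f g : F), hF.inner (v t f) g = hF.inner f (vadj t g))
    (hv_left : ∀ (t : G) (f : F), v t (vadj t f) = f)
    (hv_right : ∀ (t : G) (f : F), vadj t (v t f) = f)
    (w : G → F' → F') (wadj : G → F' → F')
    (hw_adj : ∀ (t : G) (f g : F'), hF'.inner (w t f) g = hF'.inner f (wadj t g))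
    (hw_left : ∀ (t : G) (f : F'), w t (wadj t f) = f)
    (hw_right : ∀ (t : G) (f : F'), wadj t (w t f) = f)
    -- the quasi-representation `Ψ` with associated *-homomorphism `π`
    (Ψ : E → F → F') (π : A → F → F)
    (hπ_add : ∀ (a a' : A) (f : F), π (a + a') f = π a f + π a' f)
    (hπ_smulC : ∀ (μ : ℂ) (a : A) (f : F), π (μ • a) f = μ • π a f)
    (hπ_cont : ∀ (f f' : F), Continuous fun a : A => hF.inner (π a f) f')
    (hquasi : ∀ (x y : E) (f₁ f₂ : F),
      hF'.inner (Ψ y f₁) (Ψ x f₂) = hF.inner (π (hE.inner x y) f₁) f₂)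
    -- `(w,v)`-covariance of `Ψ`
    (hΨcov : ∀ (t : G) (x : E) (f : F), Ψ (η t x) f = w t (Ψ x (vadj t f))) :
    ∀ (t : G) (a : A) (f : F), π (α t a) f = v t (π a (vadj t f)) :=
  covariant_quasi_rep_gives_covariant_rep_general hE hfull hF hF' η α hα_add hα_smulC hα_cont hα v
    vadj hv_adj w wadj hw_adj hw_right Ψ π hπ_add hπ_smulC hπ_cont hquasi hΨcov
end

section
/- Let T̃ : E ×_η G → F be the integrated form T̃(l) = ∫_G T(l(s)) u_s ds of a (u',u)-covariant τ-map T : E → F with respect to (G,η,E). Then T̃ is (u',u)-covariant in the crossed-product sense: T̃(η_t ∘ m^l_t) = u'_t T̃(m) and T̃(m^r_t) = T̃(m) u_t for all t ∈ G and m ∈ C_c(G,E), where m^l_t(s) = m(t⁻¹s) and m^r_t(s) = Δ(t)⁻¹ m(s t⁻¹) with Δ the modular function of G. -/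
open MeasureTheory

/-!
Both identities are changes of variables in the Haar integral. Covariance of `T` and unitarity of
`u` give `T(η_t x) u_{ts} = u'_t (T(x) u_s)`, so the left-hand integrand of the first identity is a
left translate of `s ↦ u'_t (T(m s) u_s)`; in the second, `T(m(s t⁻¹)) u_s` at `s t` equals
`(T(m s) u_s) u_t`, and `Δ` pays for the right translation. What remains is to pull the bounded
operators `u'_t` and `· u_t` out of the integral; `u'_t` commutes with the right `B`-action
because it has an adjoint.
-/

namespace PreHilbertMod

section Algebraic

variable {B F : Type*} [NormedRing B] [StarRing B] [PartialOrder B] [NormedAlgebra ℂ B]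
  [AddCommGroup F] [Module ℂ F] (M : PreHilbertMod B F)

theorem smul_zero_left (b : B) : M.smul 0 b = 0 := by
  simpa using M.smulC_left 0 0 b

theorem inner_sub_right (x y z : F) : M.inner x (y - z) = M.inner x y - M.inner x z := by
  rw [sub_eq_add_neg, ← neg_one_smul ℂ z, M.inner_add_right, M.inner_smulC_right, neg_one_smul,
    sub_eq_add_neg]

theorem ext_inner {y z : F} (h : ∀ x, M.inner x y = M.inner x z) : y = z :=
  sub_eq_zero.mp <| M.inner_definite _ <| by rw [M.inner_sub_right, h, sub_self]

theorem map_smul_of_adjoint {L L' : F → F} (hL : ∀ x y, M.inner (L' x) y = M.inner x (L y))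
    (z : F) (b : B) : L (M.smul z b) = M.smul (L z) b :=
  M.ext_inner fun x => by
    rw [← hL, M.inner_smul_right, M.inner_smul_right, hL]

theorem hasCompactSupport_smul {X : Type*} [TopologicalSpace X] {f : X → F}
    (hf : HasCompactSupport f) (g : X → B) : HasCompactSupport fun x => M.smul (f x) (g x) :=
  hf.mono fun x hx hfx => hx (by simp only [hfx, M.smul_zero_left])

end Algebraic

section Integral

variable {B F : Type*} [NormedRing B] [StarRing B] [PartialOrder B] [NormedAlgebra ℂ B]
  [NormedAddCommGroup F] [NormedSpace ℂ F] (M : PreHilbertMod B F)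

theorem integrable_smul {X : Type*} [TopologicalSpace X] [MeasurableSpace X]
    [OpensMeasurableSpace X] (μ : Measure X) [IsFiniteMeasureOnCompacts μ] {f : X → F} {g : X → B}
    (hf : Continuous f) (hf_supp : HasCompactSupport f) (hg : Continuous g)
    (hsmul : Continuous fun p : F × B => M.smul p.1 p.2) :
    Integrable (fun x => M.smul (f x) (g x)) μ :=
  (hsmul.comp (hf.prodMk hg)).integrable_of_hasCompactSupport (M.hasCompactSupport_smul hf_supp g)

theorem integral_smul_const [CompleteSpace F] {X : Type*} [MeasurableSpace X] {μ : Measure X}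
    {f : X → F} (hf : Integrable f μ) {b : B} (hb : Continuous fun z => M.smul z b) :
    ∫ x, M.smul (f x) b ∂μ = M.smul (∫ x, f x ∂μ) b :=
  let R : F →L[ℂ] F :=
    { toFun := fun z => M.smul z b
      map_add' := fun x y => M.add_smul_left x y b
      map_smul' := fun c x => M.smulC_left c x b
      cont := hb }
  R.integral_comp_comm hf

variable [CompleteSpace F] {G : Type*} [Group G] [MeasurableSpace G]

theorem integral_smul_left_translate [MeasurableMul G] (μ : Measure G) [μ.IsMulLeftInvariant]
    {u : G → B} (hu_mul : ∀ s t, u (s * t) = u s * u t) {t : G} (hu_t : star (u t) * u t = 1)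
    (L : F →L[ℂ] F) (hL : ∀ z b, L (M.smul z b) = M.smul (L z) b) {g h : G → F}
    (hgh : ∀ s, h s = L (M.smul (g s) (star (u t))))
    (hg : Integrable (fun s => M.smul (g s) (u s)) μ) :
    ∫ s, M.smul (h (t⁻¹ * s)) (u s) ∂μ = L (∫ s, M.smul (g s) (u s) ∂μ) := by
  have h_translate : ∀ s, M.smul (h s) (u (t * s)) = L (M.smul (g s) (u s)) := fun s => by
    rw [hgh, ← hL, M.smul_smul, hu_mul, ← mul_assoc, hu_t, one_mul]
  calc ∫ s, M.smul (h (t⁻¹ * s)) (u s) ∂μ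
      = ∫ s, M.smul (h (t⁻¹ * s)) (u (t * (t⁻¹ * s))) ∂μ := by simp only [mul_inv_cancel_left]
    _ = ∫ s, M.smul (h s) (u (t * s)) ∂μ :=
        integral_mul_left_eq_self (fun s => M.smul (h s) (u (t * s))) t⁻¹
    _ = L (∫ s, M.smul (g s) (u s) ∂μ) := by
        simp only [h_translate]
        exact L.integral_comp_comm hg

theorem integral_smul_right_translate (μ : Measure G) (Δ : G → ℝ)
    (hΔ : ∀ (f : G → F) (t : G), Integrable f μ → ∫ s, f (s * t) ∂μ = ((Δ t : ℂ))⁻¹ • ∫ s, f s ∂μ)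
    {u : G → B} (hu_mul : ∀ s t, u (s * t) = u s * u t) (t : G)
    (hu_t : Continuous fun z => M.smul z (u t)) {E : Type*} [AddCommGroup E] [Module ℂ E]
    {T : E → F} (hT : IsLinearMap ℂ T) {m : G → E}
    (hm : Integrable (fun s => M.smul (T (m s)) (u s)) μ)
    (hm_translate : Integrable (fun s => M.smul (T (m (s * t⁻¹))) (u s)) μ) :
    ∫ s, M.smul (T (((Δ t : ℂ))⁻¹ • m (s * t⁻¹))) (u s) ∂μ =
      M.smul (∫ s, M.smul (T (m s)) (u s) ∂μ) (u t) := by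
  calc ∫ s, M.smul (T (((Δ t : ℂ))⁻¹ • m (s * t⁻¹))) (u s) ∂μ
      = ((Δ t : ℂ))⁻¹ • ∫ s, M.smul (T (m (s * t⁻¹))) (u s) ∂μ := by
        simp only [hT.map_smul, M.smulC_left, integral_smul]
    _ = ∫ s, M.smul (T (m (s * t * t⁻¹))) (u (s * t)) ∂μ := (hΔ _ t hm_translate).symm
    _ = ∫ s, M.smul (M.smul (T (m s)) (u s)) (u t) ∂μ := by
        simp only [mul_inv_cancel_right, M.smul_smul, hu_mul]
    _ = M.smul (∫ s, M.smul (T (m s)) (u s) ∂μ) (u t) := M.integral_smul_const hm hu_t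

end Integral

end PreHilbertMod

theorem integrated_map_covariance_general {B C E F G : Type*}
    [NormedRing B] [StarRing B] [PartialOrder B] [NormedAlgebra ℂ B]
    [NormedRing C] [StarRing C]
    [NormedAddCommGroup E] [NormedSpace ℂ E]
    [NormedAddCommGroup F] [NormedSpace ℂ F] [CompleteSpace F]
    [Group G] [TopologicalSpace G] [IsTopologicalGroup G]
    [MeasurableSpace G] [BorelSpace G]
    (μ : Measure G) [μ.IsHaarMeasure]
    (hF : PreHilbertMod B F)
    (lact : C → F → F)
    (hlact_adj : ∀ (c : C) (z z' : F),
      hF.inner (lact c z) z' = hF.inner z (lact (star c) z'))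
    (hlact_lin : ∀ c : C, IsBoundedLinearMap ℂ (lact c))
    (η : G → E → E)
    (u : G → B)
    (hu_unit : ∀ t : G, u t * star (u t) = 1 ∧ star (u t) * u t = 1)
    (hu_mul : ∀ s t : G, u (s * t) = u s * u t)
    (hu_cont : Continuous u)
    (u' : G → C)
    (T : E → F) (hT_cont : Continuous T)
    (hTcov : ∀ (t : G) (x : E),
      T (η t x) = lact (u' t) (hF.smul (T x) (star (u t))))
    (hT_lin : IsLinearMap ℂ T)
    (hsmul_cont : Continuous fun p : F × B => hF.smul p.1 p.2)
    -- the modular function `Δ` of `G`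
    (Δ : G → ℝ)
    (hΔ : ∀ (f : G → F) (t : G), Integrable f μ →
      ∫ s, f (s * t) ∂μ = ((Δ t : ℂ))⁻¹ • ∫ s, f s ∂μ) :
    ∀ (m : G → E), Continuous m → HasCompactSupport m → ∀ t : G,
      -- `T̃(η_t ∘ m^l_t) = u'_t T̃(m)`
      ((∫ s, hF.smul (T (η t (m (t⁻¹ * s)))) (u s) ∂μ) =
        lact (u' t) (∫ s, hF.smul (T (m s)) (u s) ∂μ)) ∧
      -- `T̃(m^r_t) = T̃(m) u_t`
      ((∫ s, hF.smul (T (((Δ t : ℂ))⁻¹ • m (s * t⁻¹))) (u s) ∂μ) =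
        hF.smul (∫ s, hF.smul (T (m s)) (u s) ∂μ) (u t)) := by
  intro m hm hm_supp t
  have hTm_supp : HasCompactSupport (T ∘ m) := hm_supp.comp_left (hT_lin.mk' T).map_zero
  have hint := hF.integrable_smul μ (hT_cont.comp hm) hTm_supp hu_cont hsmul_cont
  have hint_translate := hF.integrable_smul μ (hT_cont.comp (hm.comp (continuous_mul_const t⁻¹)))
    (hTm_supp.comp_homeomorph (Homeomorph.mulRight t⁻¹)) hu_cont hsmul_cont
  have hlact_smul : ∀ z b, lact (u' t) (hF.smul z b) = hF.smul (lact (u' t) z) b :=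
    hF.map_smul_of_adjoint fun x y => by simpa using hlact_adj (star (u' t)) x y
  exact ⟨hF.integral_smul_left_translate μ hu_mul (hu_unit t).2
      (hlact_lin (u' t)).toContinuousLinearMap hlact_smul (g := fun s => T (m s))
      (fun s => hTcov t (m s)) hint,
    hF.integral_smul_right_translate μ Δ hΔ hu_mul t
      (hsmul_cont.comp (continuous_id.prodMk continuous_const)) hT_lin hint hint_translate⟩

/-- the integrated form `T̃(l) = ∫ T(l(s)) u_s ds` of a
`(u',u)`-covariant τ-map `T : E → F` is `(u',u)`-covariant in the
crossed-product sense: `T̃(η_t ∘ m^l_t) = u'_t T̃(m)` and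
`T̃(m^r_t) = T̃(m) u_t`, where `m^l_t(s) = m(t⁻¹s)` and
`m^r_t(s) = Δ(t)⁻¹ m(s t⁻¹)` with `Δ` the modular function of `G`. -/
theorem integrated_map_covariance {A B C E F G : Type*}
    [NormedRing A] [StarRing A] [CStarRing A] [PartialOrder A] [StarOrderedRing A]
    [NormedAlgebra ℂ A] [StarModule ℂ A] [CompleteSpace A]
    [NormedRing B] [StarRing B] [CStarRing B] [PartialOrder B] [StarOrderedRing B]
    [NormedAlgebra ℂ B] [StarModule ℂ B] [CompleteSpace B]
    [NormedRing C] [StarRing C] [CStarRing C] [PartialOrder C] [StarOrderedRing C]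
    [NormedAlgebra ℂ C] [StarModule ℂ C] [CompleteSpace C]
    [NormedAddCommGroup E] [NormedSpace ℂ E] [CompleteSpace E]
    [NormedAddCommGroup F] [NormedSpace ℂ F] [CompleteSpace F]
    [Group G] [TopologicalSpace G] [IsTopologicalGroup G] [LocallyCompactSpace G]
    [MeasurableSpace G] [BorelSpace G]
    (μ : Measure G) [μ.IsHaarMeasure]
    (hE : PreHilbertMod A E)
    (hnormE : ∀ x : E, ‖x‖ ^ 2 = ‖hE.inner x x‖)
    (hfull : Dense ((Submodule.span ℂ
      {a : A | ∃ x y : E, a = hE.inner x y} : Submodule ℂ A) : Set A))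
    (hF : PreHilbertMod B F)
    (hnormF : ∀ z : F, ‖z‖ ^ 2 = ‖hF.inner z z‖)
    (lact : C → F → F)
    (hlact_one : ∀ z : F, lact 1 z = z)
    (hlact_mul : ∀ (c d : C) (z : F), lact (c * d) z = lact c (lact d z))
    (hlact_adj : ∀ (c : C) (z z' : F),
      hF.inner (lact c z) z' = hF.inner z (lact (star c) z'))
    (hlact_lin : ∀ c : C, IsBoundedLinearMap ℂ (lact c))
    (η : G → E → E)
    (hη_one : ∀ x : E, η 1 x = x)
    (hη_mul : ∀ (s t : G) (x : E), η (s * t) x = η s (η t x))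
    (hη_cont : Continuous fun p : G × E => η p.1 p.2)
    (α : G → A → A)
    (hα_one : ∀ a : A, α 1 a = a)
    (hα_grp : ∀ (s t : G) (a : A), α (s * t) a = α s (α t a))
    (hα : ∀ (t : G) (x y : E), α t (hE.inner x y) = hE.inner (η t x) (η t y))
    (hηmod : ∀ (t : G) (x : E) (a : A), η t (hE.smul x a) = hE.smul (η t x) (α t a))
    (u : G → B)
    (hu_unit : ∀ t : G, u t * star (u t) = 1 ∧ star (u t) * u t = 1)
    (hu_one : u 1 = 1) (hu_mul : ∀ s t : G, u (s * t) = u s * u t)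
    (hu_cont : Continuous u)
    (u' : G → C)
    (hu'_unit : ∀ t : G, u' t * star (u' t) = 1 ∧ star (u' t) * u' t = 1)
    (hu'_one : u' 1 = 1) (hu'_mul : ∀ s t : G, u' (s * t) = u' s * u' t)
    (hu'_cont : Continuous u')
    (τ : A →ₗ[ℂ] B) (hτ_cont : Continuous τ)
    (hcp : ∀ (n : ℕ) (a : Fin n → A) (b : Fin n → B),
      0 ≤ ∑ j, ∑ i, star (b j) * τ (star (a j) * a i) * b i)
    (T : E → F) (hT_cont : Continuous T)
    (hT : ∀ x y : E, hF.inner (T x) (T y) = τ (hE.inner x y))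
    (hTcov : ∀ (t : G) (x : E),
      T (η t x) = lact (u' t) (hF.smul (T x) (star (u t))))
    (hT_lin : IsLinearMap ℂ T)
    (hsmul_cont : Continuous fun p : F × B => hF.smul p.1 p.2)
    -- the modular function `Δ` of `G`
    (Δ : G → ℝ) (hΔ_pos : ∀ t : G, 0 < Δ t)
    (hΔ : ∀ (f : G → F) (t : G), Integrable f μ →
      ∫ s, f (s * t) ∂μ = ((Δ t : ℂ))⁻¹ • ∫ s, f s ∂μ) :
    ∀ (m : G → E), Continuous m → HasCompactSupport m → ∀ t : G,
      -- `T̃(η_t ∘ m^l_t) = u'_t T̃(m)`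
      ((∫ s, hF.smul (T (η t (m (t⁻¹ * s)))) (u s) ∂μ) =
        lact (u' t) (∫ s, hF.smul (T (m s)) (u s) ∂μ)) ∧
      -- `T̃(m^r_t) = T̃(m) u_t`
      ((∫ s, hF.smul (T (((Δ t : ℂ))⁻¹ • m (s * t⁻¹))) (u s) ∂μ) =
        hF.smul (∫ s, hF.smul (T (m s)) (u s) ∂μ) (u t)) :=
  integrated_map_covariance_general μ hF lact hlact_adj hlact_lin η u hu_unit hu_mul hu_cont u' T
    hT_cont hTcov hT_lin hsmul_cont Δ hΔ
end
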